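/- If X is a Baire topological space with a countable pseudobase, then the countable power X^ω (with the product topology) is a Baire space. -/

import Mathlib

open Set Filter Topology Function

/-!
Fix dense open sets `f n` and a nonempty open set `U` in `Π i, A i`. Freezing the coordinates in a
finite set `s` at the values of `w` turns each `f n` into a slice `{z | s.piecewise w z ∈ f n}`,
and `DenseSlices f s w` says that all these slices are dense. The product has a countable
pseudobase, so a Kuratowski–Ulam type argument shows that freezing one more coordinate `j`
preserves `DenseSlices` for a residual set of values, and since `A j` is Baire such a value can be
found in any nonempty open set. Hence, for any open `H` with nonempty slice, one can freeze the
finitely many coordinates of a basic box inside that slice, after which every point extending the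
frozen values lies in `H`. Doing this for `H = U, f 0, f 1, …` in turn yields compatible frozen
values; any common extension lies in `U ∩ ⋂ n, f n`.
-/

section Pseudobase

variable {X : Type*} [TopologicalSpace X]

def IsPseudobase (B : Set (Set X)) : Prop :=
  (∀ b ∈ B, IsOpen b ∧ b.Nonempty) ∧ ∀ U : Set X, IsOpen U → U.Nonempty → ∃ b ∈ B, b ⊆ U

theorem IsPseudobase.dense_of_forall_inter_nonempty {B : Set (Set X)} (hB : IsPseudobase B)
    {s : Set X} (hs : ∀ b ∈ B, (b ∩ s).Nonempty) : Dense s := by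
  refine dense_iff_inter_open.2 fun U hU hne => ?_
  obtain ⟨b, hbB, hbU⟩ := hB.2 U hU hne
  exact (hs b hbB).mono (inter_subset_inter_left _ hbU)

theorem Dense.eventually_residual_dense_slice {Y : Type*} [TopologicalSpace Y]
    {B : Set (Set Y)} (hBc : B.Countable) (hB : IsPseudobase B) {G : Set (Y × X)}
    (hG : Dense G) (hGo : IsOpen G) : ∀ᶠ x in residual X, Dense {y | (y, x) ∈ G} := by
  have hproj : ∀ b ∈ B, Prod.snd '' (G ∩ b ×ˢ univ) ∈ residual X := fun b hb => by
    refine residual_of_dense_open (isOpenMap_snd _ (hGo.inter ((hB.1 b hb).1.prod isOpen_univ)))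
      (dense_iff_inter_open.2 fun U hU hUne => ?_)
    obtain ⟨⟨y, x⟩, ⟨hyb, hxU⟩, hyx⟩ := hG.inter_open_nonempty (b ×ˢ U)
      ((hB.1 b hb).1.prod hU) ((hB.1 b hb).2.prod hUne)
    exact ⟨x, hxU, (y, x), ⟨hyx, hyb, trivial⟩, rfl⟩
  filter_upwards [(eventually_countable_ball hBc).2 hproj] with x hx
  refine hB.dense_of_forall_inter_nonempty fun b hb => ?_
  obtain ⟨⟨y, _⟩, ⟨hyx, hyb, -⟩, rfl⟩ := hx b hb
  exact ⟨y, hyb, hyx⟩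

end Pseudobase

section Pi

variable {ι : Type*} {A : ι → Type*}

def piBoxes (B : ∀ i, Set (Set (A i))) : Set (Set (∀ i, A i)) :=
  {S | S.Nonempty ∧ ∃ (I : Finset ι) (b : ∀ i : I, B i), S = ⋂ i : I, eval (i : ι) ⁻¹' b i}

theorem countable_piBoxes [Countable ι] {B : ∀ i, Set (Set (A i))} (hBc : ∀ i, (B i).Countable) :
    (piBoxes B).Countable := by
  have := fun i => (hBc i).to_subtype
  refine (countable_iUnion fun I : Finset ι =>
    countable_range fun b : ∀ i : I, B i => ⋂ i : I, eval (i : ι) ⁻¹' b i).mono ?_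
  rintro S ⟨-, I, b, rfl⟩
  exact mem_iUnion.2 ⟨I, b, rfl⟩

theorem Finset.piecewise_insert_update [DecidableEq ι] {s : Finset ι} {j : ι} (hj : j ∉ s)
    (w z : ∀ i, A i) (x : A j) :
    (insert j s).piecewise (update w j x) z = s.piecewise w (update z j x) := by
  ext i
  by_cases hij : i = j
  · subst hij; simp [hj]
  · by_cases his : i ∈ s <;> simp [his, hij]

theorem exists_forall_eq_of_monotone {s : ℕ → Set ι} (hs : Monotone s) {w : ℕ → ∀ i, A i}
    (hw : ∀ k, ∀ i ∈ s k, w (k + 1) i = w k i) : ∃ y : ∀ i, A i, ∀ k, ∀ i ∈ s k, y i = w k i := by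
  have hcompat : ∀ k l, k ≤ l → ∀ i ∈ s k, w l i = w k i := by
    intro k l hkl i hi
    induction l, hkl using Nat.le_induction with
    | base => rfl
    | succ l hkl ih => rw [hw l i (hs hkl hi), ih]
  classical
  refine ⟨fun i => if h : ∃ k, i ∈ s k then w h.choose i else w 0 i, fun k i hi => ?_⟩
  have h : ∃ k, i ∈ s k := ⟨k, hi⟩
  simp only [dif_pos h]
  rcases le_total h.choose k with hle | hle
  · exact (hcompat _ _ hle i h.choose_spec).symm
  · exact hcompat _ _ hle i hi

variable [∀ i, TopologicalSpace (A i)]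

theorem isPseudobase_piBoxes {B : ∀ i, Set (Set (A i))} (hB : ∀ i, IsPseudobase (B i)) :
    IsPseudobase (piBoxes B) := by
  refine ⟨?_, fun U hU ⟨z, hz⟩ => ?_⟩
  · rintro S ⟨hS, I, b, rfl⟩
    exact ⟨isOpen_iInter_of_finite fun i => ((hB i).1 _ (b i).2).1.preimage (continuous_apply _),
      hS⟩
  obtain ⟨I, u, hu, hIu⟩ := isOpen_pi_iff.1 hU z hz
  have hb : ∀ i : I, ∃ b : B i, (b : Set (A i)) ⊆ u i := fun i => by
    obtain ⟨b, hbB, hbu⟩ := (hB i).2 (u i) (hu i i.2).1 ⟨z i, (hu i i.2).2⟩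
    exact ⟨⟨b, hbB⟩, hbu⟩
  choose b hbu using hb
  classical
  refine ⟨⋂ i : I, eval (i : ι) ⁻¹' b i, ⟨?_, I, b, rfl⟩, ?_⟩
  · refine ⟨fun j => if h : j ∈ I then ((hB j).1 _ (b ⟨j, h⟩).2).2.some else z j, ?_⟩
    simp only [mem_iInter, mem_preimage, eval]
    intro i
    simpa [dif_pos i.2] using ((hB i).1 _ (b i).2).2.some_mem
  · exact fun y hy => hIu fun i hi => hbu ⟨i, hi⟩ (mem_iInter.1 hy ⟨i, hi⟩)

theorem isOpenMap_update [DecidableEq ι] (j : ι) :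
    IsOpenMap fun p : (∀ i, A i) × A j => update p.1 j p.2 :=
  IsOpenMap.of_sections fun p => ⟨fun z => (update z j (p.1 j), z j),
    by fun_prop, by simp, fun z => by simp⟩

theorem Finset.continuous_piecewise (s : Finset ι) (w : ∀ i, A i) [∀ i, Decidable (i ∈ s)] :
    Continuous (s.piecewise w ·) :=
  continuous_pi fun i => by
    by_cases h : i ∈ s <;> simp [Finset.piecewise, h, continuous_apply, continuous_const]

variable [DecidableEq ι] {f : ℕ → Set (∀ i, A i)} {s : Finset ι} {w : ∀ i, A i}

def DenseSlices (f : ℕ → Set (∀ i, A i)) (s : Finset ι) (w : ∀ i, A i) : Prop :=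
  ∀ n, Dense ((s.piecewise w ·) ⁻¹' f n)

theorem DenseSlices.eventually_residual_insert (hf : ∀ n, IsOpen (f n))
    (hB : ∃ B : Set (Set (∀ i, A i)), B.Countable ∧ IsPseudobase B) (h : DenseSlices f s w)
    {j : ι} (hj : j ∉ s) : ∀ᶠ x in residual (A j), DenseSlices f (insert j s) (update w j x) := by
  obtain ⟨B, hBc, hB⟩ := hB
  refine eventually_countable_forall.2 fun n => ?_
  filter_upwards [((h n).preimage (isOpenMap_update j)).eventually_residual_dense_slice hBc hB
    (((hf n).preimage (s.continuous_piecewise w)).preimage (continuous_update j))] with x hx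
  convert hx using 2
  ext z
  simp [Finset.piecewise_insert_update hj]

variable [∀ i, BaireSpace (A i)]

theorem DenseSlices.exists_extend (hf : ∀ n, IsOpen (f n))
    (hB : ∃ B : Set (Set (∀ i, A i)), B.Countable ∧ IsPseudobase B) (h : DenseSlices f s w)
    {J : Finset ι} (hJ : Disjoint s J) {u : ∀ i, Set (A i)}
    (hu : ∀ j ∈ J, IsOpen (u j) ∧ (u j).Nonempty) :
    ∃ w', DenseSlices f (s ∪ J) w' ∧ (∀ i ∈ s, w' i = w i) ∧ ∀ j ∈ J, w' j ∈ u j := by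
  induction J using Finset.induction_on with
  | empty => exact ⟨w, by simpa using h, fun _ _ => rfl, by simp⟩
  | @insert j J hjJ ih =>
    obtain ⟨w₁, h₁, hw₁s, hw₁u⟩ :=
      ih (Finset.disjoint_of_subset_right (Finset.subset_insert j J) hJ)
        fun i hi => hu i (Finset.mem_insert_of_mem hi)
    have hjs : j ∉ s := Finset.disjoint_right.1 hJ (Finset.mem_insert_self j J)
    obtain ⟨x, hxu, hx⟩ := (dense_of_mem_residual (h₁.eventually_residual_insert hf hB
      (by simp [hjs, hjJ]))).inter_open_nonempty _ (hu j (Finset.mem_insert_self j J)).1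
      (hu j (Finset.mem_insert_self j J)).2
    refine ⟨update w₁ j x, by rwa [Finset.union_insert], fun i hi => ?_, fun i hi => ?_⟩
    · rw [update_of_ne (ne_of_mem_of_not_mem hi hjs), hw₁s i hi]
    · rcases Finset.mem_insert.1 hi with rfl | hi
      · simpa using hxu
      · rw [update_of_ne (ne_of_mem_of_not_mem hi hjJ)]
        exact hw₁u i hi

theorem DenseSlices.exists_extend_forall_mem (hf : ∀ n, IsOpen (f n))
    (hB : ∃ B : Set (Set (∀ i, A i)), B.Countable ∧ IsPseudobase B) (h : DenseSlices f s w)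
    {H : Set (∀ i, A i)} (hH : IsOpen H) (hne : ((s.piecewise w ·) ⁻¹' H).Nonempty) :
    ∃ t w', s ⊆ t ∧ (∀ i ∈ s, w' i = w i) ∧ DenseSlices f t w' ∧
      ∀ y : ∀ i, A i, (∀ i ∈ t, y i = w' i) → y ∈ H := by
  obtain ⟨z, hz⟩ := hne
  obtain ⟨I, u, hu, hIu⟩ := isOpen_pi_iff.1 (hH.preimage (s.continuous_piecewise w)) z hz
  obtain ⟨w', hw', hw's, hw'u⟩ := h.exists_extend hf hB Finset.disjoint_sdiff
    fun j hj => ⟨(hu j (Finset.mem_sdiff.1 hj).1).1, z j, (hu j (Finset.mem_sdiff.1 hj).1).2⟩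
  refine ⟨s ∪ I \ s, w', Finset.subset_union_left, hw's, hw', fun y hy => ?_⟩
  have hzy : s.piecewise z y ∈ (I : Set ι).pi u := fun i hi => by
    by_cases his : i ∈ s
    · simpa [his] using (hu i hi).2
    · have hi' : i ∈ I \ s := Finset.mem_sdiff.2 ⟨hi, his⟩
      simpa [his, hy i (Finset.mem_union_right _ hi')] using hw'u i hi'
  -- the slice ignores the coordinates in `s`, so those of `z` may be used there instead of `y`'s
  have hyw : s.piecewise w (s.piecewise z y) = y := by
    ext i
    by_cases his : i ∈ s
    · simp [his, hy i (Finset.mem_union_left _ his), hw's i his]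
    · simp [his]
  rw [← hyw]
  exact hIu hzy

theorem BaireSpace.pi_of_countable_pseudobase [Countable ι]
    (hB : ∀ i, ∃ B : Set (Set (A i)), B.Countable ∧ IsPseudobase B) : BaireSpace (∀ i, A i) := by
  choose B hBc hB using hB
  have hpi : ∃ B : Set (Set (∀ i, A i)), B.Countable ∧ IsPseudobase B :=
    ⟨piBoxes B, countable_piBoxes hBc, isPseudobase_piBoxes hB⟩
  refine ⟨fun f hfo hfd => dense_iff_inter_open.2 fun U hU ⟨z, hz⟩ => ?_⟩
  have : Nonempty (∀ i, A i) := ⟨z⟩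
  have h₀ : DenseSlices f ∅ z := by simpa [DenseSlices] using hfd
  obtain ⟨t₀, w₀, -, -, h₀', hU'⟩ := h₀.exists_extend_forall_mem hfo hpi hU ⟨z, by simpa using hz⟩
  have extend : ∀ n (p : {p : Finset ι × (∀ i, A i) // DenseSlices f p.1 p.2}),
      ∃ q : {p : Finset ι × (∀ i, A i) // DenseSlices f p.1 p.2}, p.1.1 ⊆ q.1.1 ∧
        (∀ i ∈ p.1.1, q.1.2 i = p.1.2 i) ∧
          ∀ y : ∀ i, A i, (∀ i ∈ q.1.1, y i = q.1.2 i) → y ∈ f n := by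
    rintro n ⟨⟨s, w⟩, h⟩
    obtain ⟨t, w', hst, hw', ht, hf⟩ := h.exists_extend_forall_mem hfo hpi (hfo n) (h n).nonempty
    exact ⟨⟨(t, w'), ht⟩, hst, hw', hf⟩
  choose F hFs hFw hFf using extend
  let P : ℕ → {p : Finset ι × (∀ i, A i) // DenseSlices f p.1 p.2} :=
    fun k => Nat.rec ⟨(t₀, w₀), h₀'⟩ F k
  obtain ⟨y, hy⟩ := exists_forall_eq_of_monotone (s := fun k => ((P k).1.1 : Set ι))
    (w := fun k => (P k).1.2)
    (monotone_nat_of_le_succ fun k => Finset.coe_subset.2 (hFs k (P k))) fun k => hFw k (P k)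
  exact ⟨y, hU' y (hy 0), mem_iInter.2 fun n => hFf n (P n) y (hy (n + 1))⟩

end Pi

/-- If `X` is a Baire space with a countable pseudobase, then `X^ω` is Baire. -/
theorem baire_countable_power {X : Type*} [TopologicalSpace X] [BaireSpace X]
    (hpb : ∃ B : Set (Set X), B.Countable ∧
      (∀ b ∈ B, IsOpen b ∧ b.Nonempty) ∧
      ∀ U : Set X, IsOpen U → U.Nonempty → ∃ b ∈ B, b ⊆ U) :
    BaireSpace (ℕ → X) :=
  BaireSpace.pi_of_countable_pseudobase fun _ => hpb
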